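/- arXiv:cs/0609102 — 7 statements merged into one kernel-verified Lean document; each statement's English description precedes it below -/
import Mathlib

section
/- Let T be the free magma on two binary operations * and ∘ over a single generator x (i.e., full binary trees with internal nodes labeled * or ∘ and leaves labeled x), and let ≡ be the smallest congruence on T containing all instances of the three ALD laws. Define right vines by x^[1] := x and x^[n] := x * x^[n-1]. Then for every term t in T there exists a positive integer p such that for all sufficiently large n, x^[n] ≡ t * x^[n-p]. -/
/-- Terms over two binary operations `*`, `∘` and one generator `x`. -/
inductive Tm : Type
  | x : Tm
  | star : Tm → Tm → Tm
  | circ : Tm → Tm → Tm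

/-- The smallest congruence on terms containing all instances of the three ALD laws. -/
inductive ALDeq : Tm → Tm → Prop
  | refl (t) : ALDeq t t
  | symm {t u} : ALDeq t u → ALDeq u t
  | trans {t u v} : ALDeq t u → ALDeq u v → ALDeq t v
  | starCongr {a a' b b'} : ALDeq a a' → ALDeq b b' → ALDeq (.star a b) (.star a' b')
  | circCongr {a a' b b'} : ALDeq a a' → ALDeq b b' → ALDeq (.circ a b) (.circ a' b')
  | ld (a b c) : ALDeq (.star a (.star b c)) (.star (.star a b) (.star a c))
  | ald1 (a b c) : ALDeq (.star a (.circ b c)) (.circ (.star a b) (.star a c))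
  | ald2 (a b c) : ALDeq (.star a (.star b c)) (.star (.circ a b) c)

/-- `vine n` is the right vine `x^[n+1]` (so `vine 0 = x = x^[1]`). -/
def vine : ℕ → Tm
  | 0 => .x
  | n + 1 => .star .x (vine n)

/-- Absorption: for every term `t` there is `p ≥ 1` such that for all large enough `n`,
`x^[n] ≡ t * x^[n-p]` (indices shifted by one via `vine`). -/
theorem stmt1 (t : Tm) :
    ∃ p : ℕ, 0 < p ∧ ∃ N : ℕ, ∀ n ≥ N, ALDeq (vine n) (.star t (vine (n - p))) := by
  induction t with
  | x =>
    refine ⟨1, one_pos, 1, fun n hn => ?_⟩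
    obtain ⟨m, rfl⟩ : ∃ m, n = m + 1 := ⟨n - 1, by omega⟩
    exact ALDeq.refl _
  | star a b iha ihb =>
    obtain ⟨p, hp, N, hN⟩ := iha
    obtain ⟨q, hq, M, hM⟩ := ihb
    refine ⟨q, hq, N + M + p + q, fun n hn => ?_⟩
    have h1 := hN n (by omega)
    have h2 := hM (n - p) (by omega)
    have h3 := (hN (n - q) (by omega)).symm
    have e : n - q - p = n - p - q := by omega
    rw [e] at h3
    exact ((h1.trans ((ALDeq.refl a).starCongr h2)).trans
      (ALDeq.ld a b (vine (n - p - q)))).trans ((ALDeq.refl _).starCongr h3)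
  | circ a b iha ihb =>
    obtain ⟨p, hp, N, hN⟩ := iha
    obtain ⟨q, hq, M, hM⟩ := ihb
    refine ⟨p + q, by omega, N + M + p + q, fun n hn => ?_⟩
    have h1 := hN n (by omega)
    have h2 := hM (n - p) (by omega)
    have e : n - p - q = n - (p + q) := by omega
    rw [e] at h2
    exact (h1.trans ((ALDeq.refl a).starCongr h2)).trans
      (ALDeq.ald2 a b (vine (n - (p + q))))
end

section
/- Let → be a binary relation on a set T and ∂ : T → T a map such that: (a) for every t, ∂t is a →*-successor of every one-step successor of t (i.e., t → t' implies t' →* ∂t), (b) t →* ∂t for every t, and (c) ∂ is increasing: t → t' implies ∂t →* ∂t'. Then → is confluent: for every t and every pair t₁, t₂ with t →* t₁ and t →* t₂, there is a common →*-successor; in fact, if t₁ is reachable from t in at most d steps then t₁ →* ∂^d t. -/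
/-- `BSteps R d t u` : `u` is reachable from `t` in at most `d` steps of `R`. -/
inductive BSteps {T : Type*} (R : T → T → Prop) : ℕ → T → T → Prop
  | refl (d t) : BSteps R d t t
  | step {d t u v} : R t u → BSteps R d u v → BSteps R (d + 1) t v

private lemma bsteps_mono {T : Type*} {R : T → T → Prop} {d k : ℕ} {t u : T}
    (h : BSteps R d t u) : BSteps R (d + k) t u := by
  induction h with
  | refl => exact .refl _ _
  | step h _ ih => rw [Nat.add_right_comm]; exact .step h ih

private lemma of_rtg {T : Type*} {R : T → T → Prop} {t u : T}
    (h : Relation.ReflTransGen R t u) : ∃ d, BSteps R d t u := by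
  induction h with
  | refl => exact ⟨0, .refl _ _⟩
  | tail _ h ih =>
    obtain ⟨d, hd⟩ := ih
    exact ⟨d + 1, by
      clear * - hd h
      induction hd with
      | refl => exact .step h (.refl _ _)
      | step h' _ ih => exact .step h' (ih h)⟩

/-- Confluence via the `∂` operator: if `∂t` is a `→*`-successor of every one-step
successor of `t`, `t →* ∂t`, and `∂` is increasing, then `→` is confluent; moreover
anything reachable from `t` in at most `d` steps rewrites to `∂^[d] t`. -/
theorem stmt5 (T : Type*) (R : T → T → Prop) (D : T → T)
    (ha : ∀ t t', R t t' → Relation.ReflTransGen R t' (D t))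
    (hb : ∀ t, Relation.ReflTransGen R t (D t))
    (hc : ∀ t t', R t t' → Relation.ReflTransGen R (D t) (D t')) :
    (∀ t t₁ t₂, Relation.ReflTransGen R t t₁ → Relation.ReflTransGen R t t₂ →
      ∃ u, Relation.ReflTransGen R t₁ u ∧ Relation.ReflTransGen R t₂ u) ∧
    (∀ d t t₁, BSteps R d t t₁ → Relation.ReflTransGen R t₁ (D^[d] t)) := by
  have hD : ∀ t u, Relation.ReflTransGen R t u →
      Relation.ReflTransGen R (D t) (D u) := by
    intro t u h
    induction h with
    | refl => exact .refl
    | tail _ h ih => exact ih.trans (hc _ _ h)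
  have hDd : ∀ d t u, Relation.ReflTransGen R t u →
      Relation.ReflTransGen R (D^[d] t) (D^[d] u) := by
    intro d
    induction d with
    | zero => intro t u h; simpa using h
    | succ n ih =>
      intro t u h
      simpa [Function.iterate_succ_apply] using ih _ _ (hD _ _ h)
  have hiter : ∀ d t, Relation.ReflTransGen R t (D^[d] t) := by
    intro d t
    induction d with
    | zero => exact .refl
    | succ n ih =>
      rw [Function.iterate_succ_apply']
      exact ih.trans (hb _)
  have key : ∀ d t t₁, BSteps R d t t₁ → Relation.ReflTransGen R t₁ (D^[d] t) := by
    intro d t t₁ h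
    induction h with
    | refl d t => exact hiter d t
    | @step d t u v h _ ih =>
      rw [Function.iterate_succ_apply]
      exact ih.trans (hDd d _ _ (ha _ _ h))
  refine ⟨?_, key⟩
  intro t t₁ t₂ h₁ h₂
  obtain ⟨d₁, h₁⟩ := of_rtg h₁
  obtain ⟨d₂, h₂⟩ := of_rtg h₂
  exact ⟨D^[d₁ + d₂] t, key _ _ _ (bsteps_mono h₁),
    key _ _ _ (by rw [Nat.add_comm]; exact bsteps_mono h₂)⟩
end

section
/- Let M be a monoid presented by generators and relations in which every defining relation has the form u = v with u and v words of length at most 2. Then every two elements of M admit a common right multiple; moreover, any two elements represented by words of lengths p and q have a common right multiple represented by a word of length at most p + q, provided that for every pair of generators a, b there exist generators a', b' with a·b' = b·a' among the defining relations (or derivable from them). -/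
/-- Auxiliary: a generator and a word admit a common right multiple of controlled length. -/
lemma aux6 {M : Type*} [Monoid M] {S : Set M}
    (hS : ∀ a ∈ S, ∀ b ∈ S, ∃ a' ∈ S, ∃ b' ∈ S, a * b' = b * a') :
    ∀ (v : List M), (∀ x ∈ v, x ∈ S) → ∀ a ∈ S,
      ∃ w : List M, (∀ x ∈ w, x ∈ S) ∧ w.length ≤ v.length ∧
        ∃ t : M, a * w.prod = v.prod * t := by
  intro v
  induction v with
  | nil =>
    intro _ a ha
    exact ⟨[], by simp, by simp, a, by simp⟩
  | cons b v₁ ih =>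
    intro hv a ha
    have hb : b ∈ S := hv b (by simp)
    obtain ⟨a', ha', b', hb', hab⟩ := hS a ha b hb
    obtain ⟨w₁, hw₁S, hw₁len, t, ht⟩ := ih (fun x hx => hv x (by simp [hx])) a' ha'
    refine ⟨b' :: w₁, ?_, by simpa using Nat.succ_le_succ hw₁len, t, ?_⟩
    · intro x hx
      rcases List.mem_cons.mp hx with h | h
      · exact h ▸ hb'
      · exact hw₁S x h
    · simp only [List.prod_cons, ← mul_assoc, hab]
      rw [mul_assoc, ht, ← mul_assoc]

/-- In a monoid generated by a set `S` of generators in which every pair of generators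
`a, b` admits generators `a', b'` with `a·b' = b·a'` (all defining relations having
length at most 2), any two elements admit a common right multiple; moreover elements
represented by words of lengths `p` and `q` over `S` admit a common right multiple
represented by a word of length at most `p + q`. -/
theorem stmt6 (M : Type*) [Monoid M] (S : Set M)
    (hgen : Submonoid.closure S = ⊤)
    (hS : ∀ a ∈ S, ∀ b ∈ S, ∃ a' ∈ S, ∃ b' ∈ S, a * b' = b * a') :
    (∀ x y : M, ∃ x' y' : M, x * y' = y * x') ∧
    (∀ u v : List M, (∀ x ∈ u, x ∈ S) → (∀ x ∈ v, x ∈ S) →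
      ∃ w : List M, (∀ x ∈ w, x ∈ S) ∧ w.length ≤ u.length + v.length ∧
        (∃ v' : M, w.prod = u.prod * v') ∧ (∃ u' : M, w.prod = v.prod * u')) := by
  have main : ∀ u v : List M, (∀ x ∈ u, x ∈ S) → (∀ x ∈ v, x ∈ S) →
      ∃ w : List M, (∀ x ∈ w, x ∈ S) ∧ w.length ≤ u.length + v.length ∧
        (∃ v' : M, w.prod = u.prod * v') ∧ (∃ u' : M, w.prod = v.prod * u') := by
    intro u
    induction u with
    | nil =>
      intro v _ hv
      exact ⟨v, hv, by simp, ⟨v.prod, by simp⟩, ⟨1, by simp⟩⟩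
    | cons a u₁ ih =>
      intro v hu hv
      have ha : a ∈ S := hu a (by simp)
      obtain ⟨w₁, hw₁S, hw₁len, t, ht⟩ := aux6 hS v hv a ha
      obtain ⟨w₂, hw₂S, hw₂len, ⟨s, hs⟩, ⟨r, hr⟩⟩ :=
        ih w₁ (fun x hx => hu x (by simp [hx])) hw₁S
      refine ⟨a :: w₂, ?_, ?_, ⟨s, ?_⟩, ⟨t * r, ?_⟩⟩
      · intro x hx
        rcases List.mem_cons.mp hx with h | h
        · exact h ▸ ha
        · exact hw₂S x h
      · simp only [List.length_cons]
        omega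
      · simp only [List.prod_cons, hs, mul_assoc]
      · simp only [List.prod_cons, hr, ← mul_assoc, ht]
  refine ⟨?_, main⟩
  intro x y
  have hx : x ∈ Submonoid.closure S := hgen ▸ Submonoid.mem_top x
  have hy : y ∈ Submonoid.closure S := hgen ▸ Submonoid.mem_top y
  obtain ⟨u, huS, hup⟩ := Submonoid.exists_list_of_mem_closure hx
  obtain ⟨v, hvS, hvp⟩ := Submonoid.exists_list_of_mem_closure hy
  obtain ⟨w, _, _, ⟨v', hv'⟩, ⟨u', hu'⟩⟩ := main u v huS hvS
  exact ⟨u', v', by rw [← hup, ← hvp, ← hv', ← hu']⟩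
end

section
/- In the group B• generated by s₁, s₂, … and a₁, a₂, … subject to the relations sᵢsⱼ = sⱼsᵢ, sᵢaⱼ = aⱼsᵢ, aᵢa_{j-1} = aⱼaᵢ, aᵢs_{j-1} = sⱼaᵢ (for j ≥ i+2), sᵢs_{i+1}sᵢ = s_{i+1}sᵢs_{i+1}, s_{i+1}sᵢa_{i+1} = aᵢsᵢ, and sᵢs_{i+1}aᵢ = a_{i+1}sᵢ (for i ≥ 1), let sh be the endomorphism with sh(sᵢ) = s_{i+1} and sh(aᵢ) = a_{i+1}. Define x * y := x·sh(y)·s₁·sh(x)⁻¹ and x ∘ y := x·sh(y)·a₁. Then (B•, *, ∘) satisfies the law x * (y * z) = (x ∘ y) * z. -/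
/-- The operation `x * y := x·sh(y)·s₁·sh(x)⁻¹`. -/
def bstar {B : Type*} [Group B] (sh : B →* B) (s1 : B) (x y : B) : B :=
  x * sh y * s1 * (sh x)⁻¹

/-- The operation `x ∘ y := x·sh(y)·a₁`. -/
def bcirc {B : Type*} [Group B] (sh : B →* B) (a1 : B) (x y : B) : B :=
  x * sh y * a1

/-- In the group `B•` of parenthesized braids (presented by the generators `sᵢ, aᵢ` and
the listed relations, with shift endomorphism `sh`), the operations `*` and `∘` satisfy
the law `x * (y * z) = (x ∘ y) * z`. -/
theorem stmt9 (B : Type*) [Group B] (s a : ℕ → B)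
    (hgen : Subgroup.closure {x : B | ∃ i, 1 ≤ i ∧ (x = s i ∨ x = a i)} = ⊤)
    (r1 : ∀ i j, 1 ≤ i → i + 2 ≤ j → s i * s j = s j * s i)
    (r2 : ∀ i j, 1 ≤ i → i + 2 ≤ j → s i * a j = a j * s i)
    (r3 : ∀ i j, 1 ≤ i → i + 2 ≤ j → a i * a (j - 1) = a j * a i)
    (r4 : ∀ i j, 1 ≤ i → i + 2 ≤ j → a i * s (j - 1) = s j * a i)
    (r5 : ∀ i, 1 ≤ i → s i * s (i + 1) * s i = s (i + 1) * s i * s (i + 1))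
    (r6 : ∀ i, 1 ≤ i → s (i + 1) * s i * a (i + 1) = a i * s i)
    (r7 : ∀ i, 1 ≤ i → s i * s (i + 1) * a i = a (i + 1) * s i)
    (sh : B →* B)
    (hshs : ∀ i, 1 ≤ i → sh (s i) = s (i + 1))
    (hsha : ∀ i, 1 ≤ i → sh (a i) = a (i + 1)) :
    ∀ x y z : B,
      bstar sh (s 1) x (bstar sh (s 1) y z) =
        bstar sh (s 1) (bcirc sh (a 1) x y) z := by
  -- a₁ conjugation: a1 * sh w * a1⁻¹ = sh² w
  have h1 : ∀ w : B, a 1 * sh w = sh (sh w) * a 1 := by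
    have := MonoidHom.eq_of_eqOn_top (f := (MulAut.conj (a 1)).toMonoidHom.comp sh)
      (g := sh.comp sh) (hgen ▸ MonoidHom.eqOn_closure (fun x hx => ?_))
    · intro w
      have := DFunLike.congr_fun this w
      simp [MulAut.conj_apply] at this
      exact mul_inv_eq_iff_eq_mul.mp this
    · obtain ⟨i, hi, hx | hx⟩ := hx <;> subst hx <;>
        simp [MulAut.conj_apply, hshs _ hi, hsha _ hi,
          hshs _ (le_trans hi (Nat.le_succ i)), hsha _ (le_trans hi (Nat.le_succ i))]
      · have := r4 1 (i + 2) le_rfl (by omega)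
        rw [mul_inv_eq_iff_eq_mul]; exact this
      · have := r3 1 (i + 2) le_rfl (by omega)
        rw [mul_inv_eq_iff_eq_mul]; exact this
  -- s₁ commutes with sh² w
  have h2 : ∀ w : B, s 1 * sh (sh w) = sh (sh w) * s 1 := by
    have := MonoidHom.eq_of_eqOn_top (f := (MulAut.conj (s 1)).toMonoidHom.comp (sh.comp sh))
      (g := sh.comp sh) (hgen ▸ MonoidHom.eqOn_closure (fun x hx => ?_))
    · intro w
      have := DFunLike.congr_fun this w
      simp [MulAut.conj_apply] at this
      exact mul_inv_eq_iff_eq_mul.mp this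
    · obtain ⟨i, hi, hx | hx⟩ := hx <;> subst hx <;>
        simp [MulAut.conj_apply, hshs _ hi, hsha _ hi,
          hshs _ (le_trans hi (Nat.le_succ i)), hsha _ (le_trans hi (Nat.le_succ i))]
      · rw [mul_inv_eq_iff_eq_mul]; exact r1 1 (i + 1 + 1) le_rfl (by omega)
      · rw [mul_inv_eq_iff_eq_mul]; exact r2 1 (i + 1 + 1) le_rfl (by omega)
  intro x y z
  have hc : Commute (s 1) (sh (sh y)) := h2 y
  have hs1Y : ∀ w : B, s 1 * ((sh (sh y))⁻¹ * w) = (sh (sh y))⁻¹ * (s 1 * w) := by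
    intro w; rw [← mul_assoc, hc.inv_right.eq, mul_assoc]
  have hA : ∀ w : B, a 1 * (sh z * w) = sh (sh z) * (a 1 * w) := by
    intro w; rw [← mul_assoc, h1 z, mul_assoc]
  have h6 := r6 1 le_rfl
  have h6' : ∀ w : B, a 1 * (s 1 * w) = s (1 + 1) * (s 1 * (a (1 + 1) * w)) := by
    intro w; rw [← mul_assoc, ← h6]; group
  simp only [bstar, bcirc, map_mul, map_inv, mul_inv_rev, hshs 1 le_rfl, hsha 1 le_rfl,
    mul_assoc]
  rw [hA, h6', mul_inv_cancel_left, ← hs1Y]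
end

section
/- In the group B• with the presentation of parenthesized braids (generators sᵢ, aᵢ, i ≥ 1, relations as in the previous context) and operations x * y := x·sh(y)·s₁·sh(x)⁻¹, x ∘ y := x·sh(y)·a₁, the left self-distributivity law x * (y * z) = (x * y) * (x * z) holds for all x, y, z ∈ B•. -/
/-- The key group-theoretic computation behind left self-distributivity. -/
lemma aux_ld {B : Type*} [Group B] (x q p X Y Z S1 S2 : B)
    (hbr : S1 * S2 * S1 = S2 * S1 * S2)
    (hX : S1 * X = X * S1) (hY : S1 * Y = Y * S1) (hZ : S1 * Z = Z * S1) :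
    x * (q * Z * S2 * Y⁻¹) * S1 * p⁻¹ =
      (x * q * S1 * p⁻¹) * (p * Z * S2 * X⁻¹) * S1 * (p * Y * S2 * X⁻¹)⁻¹ := by
  have h1 : X⁻¹ * S1 * X = S1 := by
    rw [mul_assoc, hX, ← mul_assoc, inv_mul_cancel, one_mul]
  have h2 : Y⁻¹ * S1 = S1 * Y⁻¹ := by
    have hc : Commute S1 Y := hY
    exact hc.inv_right.eq.symm
  calc x * (q * Z * S2 * Y⁻¹) * S1 * p⁻¹
      = x * q * Z * S2 * (Y⁻¹ * S1) * p⁻¹ := by group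
    _ = x * q * Z * S2 * (S1 * Y⁻¹) * p⁻¹ := by rw [h2]
    _ = x * q * Z * (S2 * S1 * S2) * S2⁻¹ * Y⁻¹ * p⁻¹ := by group
    _ = x * q * Z * (S1 * S2 * S1) * S2⁻¹ * Y⁻¹ * p⁻¹ := by rw [hbr]
    _ = x * q * (Z * S1) * S2 * S1 * S2⁻¹ * Y⁻¹ * p⁻¹ := by group
    _ = x * q * (S1 * Z) * S2 * S1 * S2⁻¹ * Y⁻¹ * p⁻¹ := by rw [hZ]
    _ = x * q * S1 * Z * S2 * (X⁻¹ * S1 * X) * S2⁻¹ * Y⁻¹ * p⁻¹ := by rw [h1]; group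
    _ = (x * q * S1 * p⁻¹) * (p * Z * S2 * X⁻¹) * S1 * (p * Y * S2 * X⁻¹)⁻¹ := by group

/-- In the group `B•` of parenthesized braids, the operation `x * y := x·sh(y)·s₁·sh(x)⁻¹`
is left self-distributive: `x * (y * z) = (x * y) * (x * z)`. -/
theorem stmt10 (B : Type*) [Group B] (s a : ℕ → B)
    (hgen : Subgroup.closure {x : B | ∃ i, 1 ≤ i ∧ (x = s i ∨ x = a i)} = ⊤)
    (r1 : ∀ i j, 1 ≤ i → i + 2 ≤ j → s i * s j = s j * s i)
    (r2 : ∀ i j, 1 ≤ i → i + 2 ≤ j → s i * a j = a j * s i)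
    (r3 : ∀ i j, 1 ≤ i → i + 2 ≤ j → a i * a (j - 1) = a j * a i)
    (r4 : ∀ i j, 1 ≤ i → i + 2 ≤ j → a i * s (j - 1) = s j * a i)
    (r5 : ∀ i, 1 ≤ i → s i * s (i + 1) * s i = s (i + 1) * s i * s (i + 1))
    (r6 : ∀ i, 1 ≤ i → s (i + 1) * s i * a (i + 1) = a i * s i)
    (r7 : ∀ i, 1 ≤ i → s i * s (i + 1) * a i = a (i + 1) * s i)
    (sh : B →* B)
    (hshs : ∀ i, 1 ≤ i → sh (s i) = s (i + 1))
    (hsha : ∀ i, 1 ≤ i → sh (a i) = a (i + 1)) :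
    ∀ x y z : B,
      bstar sh (s 1) x (bstar sh (s 1) y z) =
        bstar sh (s 1) (bstar sh (s 1) x y) (bstar sh (s 1) x z) := by
  -- `s 1` commutes with everything in the image of `sh ∘ sh`
  have key : ∀ g : B, s 1 * sh (sh g) = sh (sh g) * s 1 := by
    have hle : Subgroup.closure {x : B | ∃ i, 1 ≤ i ∧ (x = s i ∨ x = a i)} ≤
        (Subgroup.centralizer {s 1}).comap (sh.comp sh) := by
      rw [Subgroup.closure_le]
      rintro x ⟨i, hi, hx | hx⟩ <;> subst hx <;>
        · refine Subgroup.mem_comap.mpr (Subgroup.mem_centralizer_iff.mpr ?_)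
          rintro y rfl
          simp only [MonoidHom.comp_apply]
          first
          | rw [hshs i hi, hshs (i + 1) (by omega)]
            exact r1 1 (i + 2) le_rfl (by omega)
          | rw [hsha i hi, hsha (i + 1) (by omega)]
            exact r2 1 (i + 2) le_rfl (by omega)
    intro g
    have hg : g ∈ Subgroup.closure {x : B | ∃ i, 1 ≤ i ∧ (x = s i ∨ x = a i)} := by
      rw [hgen]; trivial
    have h := Subgroup.mem_centralizer_iff.mp (Subgroup.mem_comap.mp (hle hg))
    simpa using h (s 1) rfl
  have hbr : s 1 * sh (s 1) * s 1 = sh (s 1) * s 1 * sh (s 1) := by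
    rw [hshs 1 le_rfl]; exact r5 1 le_rfl
  intro x y z
  show x * sh (y * sh z * s 1 * (sh y)⁻¹) * s 1 * (sh x)⁻¹ = _
  simp only [bstar, map_mul, map_inv]
  exact aux_ld x (sh y) (sh x) (sh (sh x)) (sh (sh y)) (sh (sh z)) (s 1) (sh (s 1))
    hbr (key x) (key y) (key z)
end

section
/- In the group B• with the parenthesized-braid presentation and operations x * y := x·sh(y)·s₁·sh(x)⁻¹, x ∘ y := x·sh(y)·a₁, the mixed distributivity law x * (y ∘ z) = (x * y) ∘ (x * z) holds for all x, y, z ∈ B•. -/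
/-- In the group `B•` of parenthesized braids, the mixed distributivity law
`x * (y ∘ z) = (x * y) ∘ (x * z)` holds. -/
theorem stmt11 (B : Type*) [Group B] (s a : ℕ → B)
    (hgen : Subgroup.closure {x : B | ∃ i, 1 ≤ i ∧ (x = s i ∨ x = a i)} = ⊤)
    (r1 : ∀ i j, 1 ≤ i → i + 2 ≤ j → s i * s j = s j * s i)
    (r2 : ∀ i j, 1 ≤ i → i + 2 ≤ j → s i * a j = a j * s i)
    (r3 : ∀ i j, 1 ≤ i → i + 2 ≤ j → a i * a (j - 1) = a j * a i)
    (r4 : ∀ i j, 1 ≤ i → i + 2 ≤ j → a i * s (j - 1) = s j * a i)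
    (r5 : ∀ i, 1 ≤ i → s i * s (i + 1) * s i = s (i + 1) * s i * s (i + 1))
    (r6 : ∀ i, 1 ≤ i → s (i + 1) * s i * a (i + 1) = a i * s i)
    (r7 : ∀ i, 1 ≤ i → s i * s (i + 1) * a i = a (i + 1) * s i)
    (sh : B →* B)
    (hshs : ∀ i, 1 ≤ i → sh (s i) = s (i + 1))
    (hsha : ∀ i, 1 ≤ i → sh (a i) = a (i + 1)) :
    ∀ x y z : B,
      bstar sh (s 1) x (bcirc sh (a 1) y z) =
        bcirc sh (a 1) (bstar sh (s 1) x y) (bstar sh (s 1) x z) := by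
  -- `s 1` commutes with everything in the image of `sh ∘ sh`.
  have hc : ∀ w : B, Commute (s 1) (sh (sh w)) := by
    intro w
    have hw : w ∈ Subgroup.closure {x : B | ∃ i, 1 ≤ i ∧ (x = s i ∨ x = a i)} := by
      rw [hgen]; trivial
    refine Subgroup.closure_induction
      (p := fun w _ => Commute (s 1) (sh (sh w))) ?_ ?_ ?_ ?_ hw
    · rintro x ⟨i, hi, rfl | rfl⟩
      · rw [hshs i hi, hshs (i + 1) (by omega)]
        exact r1 1 (i + 2) le_rfl (by omega)
      · rw [hsha i hi, hsha (i + 1) (by omega)]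
        exact r2 1 (i + 2) le_rfl (by omega)
    · simp [Commute.one_right]
    · intro u v _ _ hu hv
      rw [map_mul, map_mul]; exact hu.mul_right hv
    · intro u _ hu
      rw [map_inv, map_inv]; exact hu.inv_right
  -- `a 1 * sh w = sh (sh w) * a 1` for all `w`.
  have ha : ∀ w : B, SemiconjBy (a 1) (sh w) (sh (sh w)) := by
    intro w
    have hw : w ∈ Subgroup.closure {x : B | ∃ i, 1 ≤ i ∧ (x = s i ∨ x = a i)} := by
      rw [hgen]; trivial
    refine Subgroup.closure_induction
      (p := fun w _ => SemiconjBy (a 1) (sh w) (sh (sh w))) ?_ ?_ ?_ ?_ hw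
    · rintro x ⟨i, hi, rfl | rfl⟩
      · rw [hshs i hi, hshs (i + 1) (by omega)]
        have h := r4 1 (i + 2) le_rfl (by omega)
        have : i + 2 - 1 = i + 1 := by omega
        rw [this] at h
        exact h
      · rw [hsha i hi, hsha (i + 1) (by omega)]
        have h := r3 1 (i + 2) le_rfl (by omega)
        have : i + 2 - 1 = i + 1 := by omega
        rw [this] at h
        exact h
    · simp [SemiconjBy.one_right]
    · intro u v _ _ hu hv
      rw [map_mul, map_mul]; exact hu.mul_right hv
    · intro u _ hu
      rw [map_inv, map_inv]; exact hu.inv_right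
  intro x y z
  simp only [bstar, bcirc, map_mul, map_inv, hsha 1 le_rfl, mul_assoc,
    inv_mul_cancel_left, hshs 1 le_rfl]
  congr 2
  rw [← mul_assoc (s 1), (hc z).eq, mul_assoc]
  congr 1
  rw [← ((ha x).inv_right).eq]
  simp only [← mul_assoc]
  rw [r7 1 le_rfl]
end

section
/- Let T be the terms over *, ∘ and variable x, and let Cc : T → G be defined inductively into a group G equipped with elements S, A and an endomorphism sh₁ by: Cc(x) = 1, Cc(t₁ * t₂) = Cc(t₁)·sh₁(Cc(t₂))·S·sh₁(Cc(t₁))⁻¹, Cc(t₁ ∘ t₂) = Cc(t₁)·sh₁(Cc(t₂))·A. Suppose G is the free group on {S_α, A_α : α ∈ {0,1}*} with S = S_ε, A = A_ε and sh₁ the endomorphism sending S_α ↦ S_{1α}, A_α ↦ A_{1α}. Then Cc is injective: distinct terms have distinct images. -/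
/-!
Write `Cc t = lead t * sh₁ (trail t)`, where `lead t` is `1` for `t = x` and otherwise ends with
the unshifted letter `S` or `A` recording the outer operation. Unshifted letters occur in `Cc t`
only with exponent `+1`, so appending `S` or `A` never cancels, and shifted letters cannot cancel
unshifted ones; hence the reduced word of `Cc t * sh₁ g` is that of `lead t` followed by a purely
shifted word. Its last unshifted letter therefore recovers the outer operation, `lead t` and
`trail t * g`, and removing the letter leaves `Cc t₁ * sh₁ (Cc t₂)`, to which induction applies.
-/

/-- Terms over binary symbols `*`, `∘` and the single variable `x`. -/
inductive Tm18 : Type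
  | x : Tm18
  | star : Tm18 → Tm18 → Tm18
  | circ : Tm18 → Tm18 → Tm18

/-- The free group on the generators `S_α` (encoded `(false, α)`) and `A_α`
(encoded `(true, α)`) for binary addresses `α`. -/
abbrev G18 := FreeGroup (Bool × List Bool)

/-- The shift endomorphism `sh₁`, sending `S_α ↦ S_{1α}` and `A_α ↦ A_{1α}`. -/
def sh18 : G18 →* G18 := FreeGroup.map (fun p => (p.1, true :: p.2))

/-- `S = S_ε`. -/
def S18 : G18 := FreeGroup.of (false, [])

/-- `A = A_ε`. -/
def A18 : G18 := FreeGroup.of (true, [])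

/-- The blueprint map `Cc` into the free group. -/
def Cc18 : Tm18 → G18
  | .x => 1
  | .star a b => Cc18 a * sh18 (Cc18 b) * S18 * (sh18 (Cc18 a))⁻¹
  | .circ a b => Cc18 a * sh18 (Cc18 b) * A18

namespace List

theorem eq_of_append_eq_append_of_getLast?_not {α : Type*} {P : α → Prop}
    {l₁ l₂ m₁ m₂ : List α} (hl₁ : ∀ a ∈ l₁.getLast?, ¬P a) (hl₂ : ∀ a ∈ l₂.getLast?, ¬P a)
    (hm₁ : ∀ a ∈ m₁, P a) (hm₂ : ∀ a ∈ m₂, P a) (h : l₁ ++ m₁ = l₂ ++ m₂) : l₁ = l₂ := by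
  have overlap_nil : ∀ {l w m : List α}, (∀ a ∈ (l ++ w).getLast?, ¬P a) →
      (∀ a ∈ w ++ m, P a) → w = [] := by
    intro l w m hl hw
    rcases w.eq_nil_or_concat with rfl | ⟨w, a, rfl⟩
    · rfl
    · exact absurd (hw a (by simp)) (hl a (by simp))
  obtain ⟨w, rfl, rfl⟩ | ⟨w, rfl, rfl⟩ := append_eq_append_iff.mp h
  · simp [overlap_nil hl₂ hm₁]
  · simp [overlap_nil hl₁ hm₂]

end List

namespace FreeGroup

variable {α β : Type*} [DecidableEq α]

theorem toWord_mul_of_isReduced {x y : FreeGroup α} (h : IsReduced (x.toWord ++ y.toWord)) :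
    (x * y).toWord = x.toWord ++ y.toWord := by
  rw [toWord_mul, h.reduce_eq]

theorem toWord_map [DecidableEq β] {f : β → α} (hf : Function.Injective f) (x : FreeGroup β) :
    (map f x).toWord = x.toWord.map (Prod.map f id) := by
  conv_lhs => rw [← mk_toWord (x := x), map.mk, toWord_mk]
  refine IsReduced.reduce_eq ((List.isChain_map _).mpr ?_)
  exact isReduced_toWord.imp fun a b hab hfab ↦ hab (hf hfab)

theorem eq_and_eq_of_mul_map_eq [DecidableEq β] {f : β → α} (hf : Function.Injective f)
    {p p' : FreeGroup α} (hp : ∀ l ∈ p.toWord.getLast?, l.1 ∉ Set.range f)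
    (hp' : ∀ l ∈ p'.toWord.getLast?, l.1 ∉ Set.range f) {r r' : FreeGroup β}
    (h : p * map f r = p' * map f r') : p = p' ∧ r = r' := by
  have map_letter : ∀ (r : FreeGroup β), ∀ l ∈ (map f r).toWord, l.1 ∈ Set.range f := by
    intro r l hl
    obtain ⟨l, -, rfl⟩ := List.mem_map.mp (toWord_map hf r ▸ hl)
    exact ⟨l.1, rfl⟩
  have toWord_mul_map : ∀ q : FreeGroup α, (∀ l ∈ q.toWord.getLast?, l.1 ∉ Set.range f) →
      ∀ r, (q * map f r).toWord = q.toWord ++ (map f r).toWord := by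
    refine fun q hq r ↦ toWord_mul_of_isReduced (List.isChain_append.mpr
      ⟨isReduced_toWord, isReduced_toWord, fun a ha b hb hab ↦ ?_⟩)
    exact (hq a ha (hab ▸ map_letter r b (List.mem_of_mem_head? hb))).elim
  have hw := congrArg toWord h
  rw [toWord_mul_map p hp, toWord_mul_map p' hp'] at hw
  obtain rfl : p = p' := toWord_injective <|
    List.eq_of_append_eq_append_of_getLast?_not hp hp' (map_letter r) (map_letter r') hw
  exact ⟨rfl, map_injective hf (mul_left_cancel h)⟩

def positiveOn (s : Set α) : Submonoid (FreeGroup α) where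
  carrier := {g | ∀ l ∈ g.toWord, l.1 ∈ s → l.2 = true}
  one_mem' := by simp
  mul_mem' {x y} hx hy l hl := by
    rcases List.mem_append.mp ((toWord_mul_sublist x y).subset hl) with h | h
    exacts [hx l h, hy l h]

theorem of_mem_positiveOn (s : Set α) (a : α) : of a ∈ positiveOn s := by
  simp [positiveOn, toWord_of]

theorem map_mem_positiveOn [DecidableEq β] {f : β → α} (hf : Function.Injective f)
    {s : Set α} (hs : Disjoint s (Set.range f)) (x : FreeGroup β) : map f x ∈ positiveOn s := by
  intro l hl hls
  obtain ⟨l, -, rfl⟩ := List.mem_map.mp (toWord_map hf x ▸ hl)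
  exact absurd ⟨l.1, rfl⟩ (hs.notMem_of_mem_left hls)

theorem toWord_mul_of_of_mem_positiveOn {s : Set α} {m : FreeGroup α} (hm : m ∈ positiveOn s)
    {a : α} (ha : a ∈ s) : (m * of a).toWord = m.toWord ++ [(a, true)] := by
  rw [← toWord_of]
  refine toWord_mul_of_isReduced (List.isChain_append.mpr
    ⟨isReduced_toWord, isReduced_toWord, fun l hl b hb hlb ↦ ?_⟩)
  simp only [toWord_of, List.head?_cons, Option.mem_some_iff] at hb
  subst hb
  rw [hm l (List.mem_of_mem_getLast? hl) (hlb ▸ ha)]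

end FreeGroup

namespace Tm18

def shiftLetter (p : Bool × List Bool) : Bool × List Bool := (p.1, true :: p.2)

theorem shiftLetter_injective : Function.Injective shiftLetter := by
  rintro ⟨c, w⟩ ⟨c', w'⟩ h
  simpa [shiftLetter] using h

theorem sh18_mem_positiveOn (g : G18) :
    sh18 g ∈ FreeGroup.positiveOn (Set.range shiftLetter)ᶜ :=
  FreeGroup.map_mem_positiveOn shiftLetter_injective disjoint_compl_left g

/-- The prefix of `Cc18 t` up to and including its last unshifted letter. -/
def lead : Tm18 → G18
  | x => 1
  | star a b => Cc18 a * sh18 (Cc18 b) * S18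
  | circ a b => Cc18 a * sh18 (Cc18 b) * A18

def trail : Tm18 → G18
  | star a _ => (Cc18 a)⁻¹
  | _ => 1

def outer : Tm18 → Option Bool
  | x => none
  | star _ _ => some false
  | circ _ _ => some true

theorem Cc18_eq_lead_mul (t : Tm18) : Cc18 t = lead t * sh18 (trail t) := by
  cases t <;> simp [Cc18, lead, trail]

theorem Cc18_mem_positiveOn (t : Tm18) :
    Cc18 t ∈ FreeGroup.positiveOn (Set.range shiftLetter)ᶜ := by
  induction t with
  | x => exact one_mem _
  | star a b iha _ =>
    rw [Cc18_eq_lead_mul]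
    exact mul_mem (mul_mem (mul_mem iha (sh18_mem_positiveOn _))
      (FreeGroup.of_mem_positiveOn _ _)) (sh18_mem_positiveOn _)
  | circ a b iha _ =>
    exact mul_mem (mul_mem iha (sh18_mem_positiveOn _)) (FreeGroup.of_mem_positiveOn _ _)

theorem getLast?_toWord_lead (t : Tm18) :
    (lead t).toWord.getLast? = (outer t).map fun c ↦ ((c, []), true) := by
  have hnode : ∀ a b c, (Cc18 a * sh18 (Cc18 b) * FreeGroup.of (c, [])).toWord.getLast? =
      some ((c, []), true) := by
    intro a b c
    rw [FreeGroup.toWord_mul_of_of_mem_positiveOn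
      (mul_mem (Cc18_mem_positiveOn a) (sh18_mem_positiveOn _)) (by simp [shiftLetter]),
      List.getLast?_concat]
  cases t
  · rfl
  · exact hnode ..
  · exact hnode ..

theorem lead_eq_and_trail_mul_eq {a a' : Tm18} {g g' : G18}
    (h : Cc18 a * sh18 g = Cc18 a' * sh18 g') :
    lead a = lead a' ∧ trail a * g = trail a' * g' := by
  rw [Cc18_eq_lead_mul a, Cc18_eq_lead_mul a', mul_assoc, mul_assoc, ← map_mul, ← map_mul] at h
  have last_unshifted :
      ∀ t : Tm18, ∀ l ∈ (lead t).toWord.getLast?, l.1 ∉ Set.range shiftLetter := by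
    intro t l hl
    rw [getLast?_toWord_lead] at hl
    obtain ⟨c, -, rfl⟩ := Option.mem_map.mp hl
    simp [shiftLetter]
  exact FreeGroup.eq_and_eq_of_mul_map_eq shiftLetter_injective
    (last_unshifted a) (last_unshifted a') h

theorem eq_and_eq_of_Cc18_mul_sh18_eq {a a' : Tm18} {g g' : G18}
    (h : Cc18 a * sh18 g = Cc18 a' * sh18 g') : a = a' ∧ g = g' := by
  obtain ⟨hlead, htrail⟩ := lead_eq_and_trail_mul_eq h
  have hout : outer a = outer a' :=
    Option.map_injective (f := fun c : Bool ↦ ((c, ([] : List Bool)), true))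
      (fun _ _ h ↦ by simpa using h) <| by
      rw [← getLast?_toWord_lead, ← getLast?_toWord_lead, hlead]
  obtain rfl : a = a' :=
    match a, a', hout with
    | x, x, _ => rfl
    | star c d, star c' d', _ | circ c d, circ c' d', _ => by
      obtain ⟨rfl, hd⟩ := eq_and_eq_of_Cc18_mul_sh18_eq (mul_right_cancel hlead)
      obtain ⟨rfl, -⟩ :=
        eq_and_eq_of_Cc18_mul_sh18_eq (a' := d') (g := 1) (g' := 1) (by rw [hd])
      rfl
  exact ⟨rfl, mul_left_cancel htrail⟩

end Tm18

/-- The blueprint map into the free group is injective: distinct terms have distinct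
images. -/
theorem stmt18 : Function.Injective Cc18 := fun _ _ h ↦
  (Tm18.eq_and_eq_of_Cc18_mul_sh18_eq (g := 1) (g' := 1) (by rw [h])).1
end
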